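/- Let G=(V,A) and suppose the maximum number of pairwise arc-disjoint s-t paths in G equals m. In the auxiliary min-cost flow instance where each arc of A has capacity 1 and a dummy arc (s,t) of capacity k and cost strictly greater than ∑_{a∈A} c(a) is added, any minimum-cost integral flow of value k in the auxiliary graph sends exactly max(k−m, 0) units on the dummy arc. -/

import Mathlib

open Finset

variable {V : Type}

/-- The arcs (consecutive vertex pairs) of a path given as a vertex list. -/
def arcs (p : List V) : List (V × V) := p.zip p.tail

/-- `p` is a simple directed `s`-`t` path using only arcs of `E`. -/
def IsPath [DecidableEq V] (E : Finset (V × V)) (s t : V) (p : List V) : Prop :=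
  p.head? = some s ∧ p.getLast? = some t ∧ p.Nodup ∧ ∀ a ∈ arcs p, a ∈ E

/-- The bottleneck (minimum capacity) of a path. -/
noncomputable def mincap (b : V × V → ℝ) (p : List V) : ℝ :=
  sInf (b '' {a | a ∈ arcs p})

/-- `f` is a feasible `s`-`t` flow on the arc set `E` with capacities `b`. -/
structure IsFlow [Fintype V] (E : Finset (V × V)) (b : V × V → ℝ) (s t : V)
    (f : V × V → ℝ) : Prop where
  nonneg : ∀ a, 0 ≤ f a
  support : ∀ a, a ∉ E → f a = 0
  cap : ∀ a ∈ E, f a ≤ b a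
  conserve : ∀ v, v ≠ s → v ≠ t → (∑ u, f (u, v)) = (∑ u, f (v, u))

/-- The value of a flow: net outflow at the source `s`. -/
noncomputable def flowValue [Fintype V] (s : V) (f : V × V → ℝ) : ℝ :=
  (∑ u, f (s, u)) - (∑ u, f (u, s))

/-- The maximum `s`-`t` flow value on arc set `E` with capacities `b`. -/
noncomputable def maxFlow [Fintype V] (E : Finset (V × V)) (b : V × V → ℝ) (s t : V) : ℝ :=
  sSup {x | ∃ f, IsFlow E b s t f ∧ flowValue s f = x}

/-- The arcs used by a (finite) set of paths. -/
def inducedArcs [DecidableEq V] (P : Finset (List V)) : Finset (V × V) :=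
  P.biUnion fun p => (arcs p).toFinset

/-- The arcs used by a family of `k` paths (repetitions allowed). -/
def inducedArcsFam [DecidableEq V] {k : ℕ} (P : Fin k → List V) : Finset (V × V) :=
  Finset.univ.biUnion fun i => (arcs (P i)).toFinset

/-- The paths in `P` are pairwise arc-disjoint. -/
def ArcDisjoint (P : Finset (List V)) : Prop :=
  ∀ p ∈ P, ∀ q ∈ P, p ≠ q → ∀ a, a ∈ arcs p → a ∉ arcs q

/-- Worst residual max-flow: minimum over single-arc failures `a ∈ Fail` of the
max-flow on `E` with `a` removed. -/
noncomputable def worstFlow [Fintype V] [DecidableEq V] (Fail E : Finset (V × V))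
    (b : V × V → ℝ) (s t : V) : ℝ :=
  sInf {x | ∃ a ∈ Fail, maxFlow (E.erase a) b s t = x}

/-- The arc set `S` contains a directed cycle. -/
def HasCycle [DecidableEq V] (S : Finset (V × V)) : Prop :=
  ∃ p : List V, 2 ≤ p.length ∧ p.head? = p.getLast? ∧ (p.drop 1).Nodup ∧
    ∀ a ∈ arcs p, a ∈ S

lemma arcs_nil : arcs ([] : List V) = [] := rfl
lemma arcs_single (a : V) : arcs [a] = [] := rfl
lemma arcs_cons₂ (x y : V) (l : List V) : arcs (x :: y :: l) = (x, y) :: arcs (y :: l) := rfl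

lemma map_fst_arcs : ∀ p : List V, (arcs p).map Prod.fst = p.dropLast := by
  intro p
  induction p with
  | nil => rfl
  | cons x l ih =>
    cases l with
    | nil => rfl
    | cons y l' => simp [arcs_cons₂, ih]

lemma map_snd_arcs : ∀ p : List V, (arcs p).map Prod.snd = p.tail := by
  intro p
  induction p with
  | nil => rfl
  | cons x l ih =>
    cases l with
    | nil => rfl
    | cons y l' => simpa [arcs_cons₂] using ih

lemma arcs_concat : ∀ (p : List V) (h : p ≠ []) (w : V),
    arcs (p ++ [w]) = arcs p ++ [(p.getLast h, w)] := by
  intro p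
  induction p with
  | nil => simp
  | cons x l ih =>
    intro h w
    cases l with
    | nil => rfl
    | cons y l' =>
      have h2 : (y :: l') ≠ [] := by simp
      show ((x, y) :: arcs ((y :: l') ++ [w])) = ((x,y) :: arcs (y::l')) ++ [((x::y::l').getLast h, w)]
      rw [ih h2]
      simp [List.getLast_cons]

lemma arcs_cons_subset (x : V) (l : List V) : ∀ a ∈ arcs l, a ∈ arcs (x :: l) := by
  cases l with
  | nil => simp [arcs_nil]
  | cons y l' => intro a ha; rw [arcs_cons₂]; exact List.mem_cons_of_mem _ ha

lemma count_dropLast_tail [DecidableEq V] (p : List V) (s t v : V)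
    (hh : p.head? = some s) (hl : p.getLast? = some t) :
    p.dropLast.count v + (if v = t then 1 else 0)
      = p.tail.count v + (if v = s then 1 else 0) := by
  have hne : p ≠ [] := by rintro rfl; simp at hh
  have hlast : p.getLast hne = t := by
    rw [List.getLast?_eq_getLast hne] at hl; exact Option.some_injective _ hl
  have h1 : p.count v = p.dropLast.count v + (if v = t then 1 else 0) := by
    conv_lhs => rw [← List.dropLast_concat_getLast hne]
    rw [List.count_append, hlast]
    simp [List.count_singleton', eq_comm]
  have h2 : p.count v = p.tail.count v + (if v = s then 1 else 0) := by
    obtain ⟨a, l, rfl⟩ : ∃ a l, p = a :: l := by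
      cases p with
      | nil => exact absurd rfl hne
      | cons a l => exact ⟨a, l, rfl⟩
    have : a = s := by simpa using hh
    subst this
    rw [List.count_cons]
    by_cases hvs : v = a
    · subst hvs; simp
    · simp [hvs, Ne.symm hvs]
  omega

def outd [DecidableEq V] (S : Finset (V × V)) (v : V) : ℕ :=
  (S.filter fun a => a.1 = v).card

def ind [DecidableEq V] (S : Finset (V × V)) (v : V) : ℕ :=
  (S.filter fun a => a.2 = v).card

lemma count_toFinset_filter {α β : Type*} [DecidableEq α] [DecidableEq β]
    (f : α → β) (v : β) : ∀ (L : List α), L.Nodup →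
    (L.toFinset.filter fun a => f a = v).card = (L.map f).count v := by
  intro L
  induction L with
  | nil => simp
  | cons a L ih =>
    intro h
    rw [List.nodup_cons] at h
    rw [List.toFinset_cons, Finset.filter_insert, List.map_cons, List.count_cons]
    by_cases hav : f a = v
    · rw [if_pos hav, Finset.card_insert_of_notMem, ih h.2]
      · simp [hav]
      · intro hx; exact h.1 (by simpa using (Finset.mem_filter.mp hx).1)
    · rw [if_neg hav, ih h.2]; simp [hav]

lemma outd_toFinset [DecidableEq V] (L : List (V × V)) (h : L.Nodup) (v : V) :
    outd L.toFinset v = (L.map Prod.fst).count v :=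
  count_toFinset_filter Prod.fst v L h

lemma ind_toFinset [DecidableEq V] (L : List (V × V)) (h : L.Nodup) (v : V) :
    ind L.toFinset v = (L.map Prod.snd).count v :=
  count_toFinset_filter Prod.snd v L h

lemma card_filter_sdiff {α : Type*} [DecidableEq α] (S T : Finset α) (hT : T ⊆ S)
    (P : α → Prop) [DecidablePred P] :
    ((S \ T).filter P).card + (T.filter P).card = (S.filter P).card := by
  rw [← Finset.card_union_of_disjoint
    (Finset.disjoint_filter_filter Finset.sdiff_disjoint),
    ← Finset.filter_union, Finset.sdiff_union_of_subset hT]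

lemma sum_ite_ind [Fintype V] [DecidableEq V] (S : Finset (V × V)) (v : V) :
    ∑ u : V, (if (u, v) ∈ S then (1 : ℝ) else 0) = ind S v := by
  rw [Finset.sum_boole]
  norm_num [ind]
  apply Finset.card_bij (fun u _ => (u, v))
  · intro u hu; simp at hu ⊢; exact hu
  · intro u hu u' hu' he; exact (Prod.mk.injEq _ _ _ _ ▸ he).1
  · intro a ha
    simp at ha
    have he : (a.1, v) = a := Prod.ext rfl ha.2.symm
    exact ⟨a.1, by simp [he, ha.1], he⟩

lemma sum_ite_outd [Fintype V] [DecidableEq V] (S : Finset (V × V)) (v : V) :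
    ∑ u : V, (if (v, u) ∈ S then (1 : ℝ) else 0) = outd S v := by
  rw [Finset.sum_boole]
  norm_num [outd]
  apply Finset.card_bij (fun u _ => (v, u))
  · intro u hu; simp at hu ⊢; exact hu
  · intro u hu u' hu' he; exact (Prod.mk.injEq _ _ _ _ ▸ he).2
  · intro a ha
    simp at ha
    have he : (v, a.2) = a := Prod.ext ha.2.symm rfl
    exact ⟨a.2, by simp [he, ha.1], he⟩

lemma arcs_append_right : ∀ (l₁ l₂ : List V) (a : V × V), a ∈ arcs l₂ → a ∈ arcs (l₁ ++ l₂) := by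
  intro l₁
  induction l₁ with
  | nil => simp
  | cons x l ih => intro l₂ a ha; exact arcs_cons_subset x _ _ (ih l₂ a ha)

lemma extract_step [DecidableEq V] (S : Finset (V × V)) (s t : V) (hst : s ≠ t)
    (hcons : ∀ v, v ≠ s → v ≠ t → ind S v = outd S v)
    (hs : ind S s < outd S s)
    (p : List V) (hp : p ≠ []) (hh : p.head? = some s) (hnd : p.Nodup)
    (ht : t ∉ p) (harc : ∀ a ∈ arcs p, a ∈ S) :
    ((∃ q, IsPath S s t q) ∨
      ∃ L : List (V × V), L ≠ [] ∧ (∀ a ∈ L, a ∈ S) ∧ (L.map Prod.fst).Nodup ∧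
        (L.map Prod.fst).Perm (L.map Prod.snd)) ∨
    ∃ w, w ∉ p ∧ w ≠ t ∧ (p.getLast hp, w) ∈ S := by
  set v := p.getLast hp with hv
  have hvp : v ∈ p := List.getLast_mem hp
  have hvt : v ≠ t := fun h => ht (h ▸ hvp)
  have hout : 0 < outd S v := by
    by_cases hvs : v = s
    · rw [hvs]; omega
    · have htl : p.tail ≠ [] := by
        intro h0
        cases p with
        | nil => exact hp rfl
        | cons a l =>
          simp only [List.tail_cons] at h0
          subst h0
          apply hvs
          have ha : a = s := by simpa using hh
          rw [hv]
          simpa using ha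
      have hvtail : v ∈ p.tail := by
        cases p with
        | nil => exact absurd rfl hp
        | cons a l =>
          simp only [List.tail_cons] at htl ⊢
          rw [hv, List.getLast_cons htl]
          exact List.getLast_mem htl
      have : v ∈ (arcs p).map Prod.snd := by rw [map_snd_arcs]; exact hvtail
      obtain ⟨a, ha, hav⟩ := List.mem_map.mp this
      have hmem : a ∈ S.filter (fun x => x.2 = v) :=
        Finset.mem_filter.mpr ⟨harc a ha, hav⟩
      have hind : 0 < ind S v := Finset.card_pos.mpr ⟨a, hmem⟩
      have := hcons v hvs hvt
      omega
  obtain ⟨a, ha⟩ := Finset.card_pos.mp hout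
  obtain ⟨haS, hafst⟩ := Finset.mem_filter.mp ha
  have haw : (v, a.2) ∈ S := by rwa [show (v, a.2) = a from Prod.ext hafst.symm rfl]
  set w := a.2 with hw
  by_cases hwt : w = t
  · left; left
    refine ⟨p ++ [t], ?_, ?_, ?_, ?_⟩
    · rw [List.head?_append_of_ne_nil _ hp]; exact hh
    · rw [List.getLast?_append_of_ne_nil _ (by simp)]; simp
    · rw [List.nodup_append]
      exact ⟨hnd, List.nodup_singleton t, fun x hx y hy hxy => ht (by rw [← List.mem_singleton.mp hy, ← hxy]; exact hx)⟩
    · rw [arcs_concat p hp]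
      intro x hx
      rcases List.mem_append.mp hx with h1 | h1
      · exact harc x h1
      · rw [List.mem_singleton.mp h1, ← hv]; exact hwt ▸ haw
  by_cases hwp : w ∈ p
  · left; right
    obtain ⟨l₁, l₂, hpe⟩ := List.append_of_mem hwp
    have hq : (w :: l₂ : List V) ≠ [] := by simp
    have hql : (w :: l₂).getLast hq = v := by
      have h1 : p.getLast? = some v := by rw [hv, List.getLast?_eq_getLast hp]
      have h2 : p.getLast? = (w :: l₂).getLast? := by
        rw [hpe]; exact List.getLast?_append_of_ne_nil l₁ hq
      rw [h1, List.getLast?_eq_getLast hq] at h2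
      exact (Option.some_injective _ h2).symm
    refine ⟨arcs (w :: l₂) ++ [(v, w)], by simp, ?_, ?_, ?_⟩
    · intro x hx
      rcases List.mem_append.mp hx with h1 | h1
      · exact harc x (hpe ▸ arcs_append_right l₁ _ x h1)
      · rw [List.mem_singleton.mp h1]; exact haw
    · rw [List.map_append, map_fst_arcs]
      simp only [List.map_cons, List.map_nil]
      rw [← hql, List.dropLast_concat_getLast hq]
      exact (List.Nodup.of_append_right (hpe ▸ hnd) : (w :: l₂).Nodup)
    · rw [List.map_append, map_fst_arcs, List.map_append, map_snd_arcs]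
      simp only [List.map_cons, List.map_nil, List.tail_cons]
      rw [← hql, List.dropLast_concat_getLast hq]
      exact (List.perm_append_singleton _ _).symm
  · right; exact ⟨w, hwp, hwt, haw⟩

lemma extract [Fintype V] [DecidableEq V] (S : Finset (V × V)) (s t : V) (hst : s ≠ t)
    (hcons : ∀ v, v ≠ s → v ≠ t → ind S v = outd S v)
    (hs : ind S s < outd S s) :
    (∃ q, IsPath S s t q) ∨
      ∃ L : List (V × V), L ≠ [] ∧ (∀ a ∈ L, a ∈ S) ∧ (L.map Prod.fst).Nodup ∧
        (L.map Prod.fst).Perm (L.map Prod.snd) := by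
  suffices h : ∀ (n : ℕ) (p : List V) (hp : p ≠ []), p.head? = some s → p.Nodup → t ∉ p →
      (∀ a ∈ arcs p, a ∈ S) → Fintype.card V ≤ n + p.length →
      ((∃ q, IsPath S s t q) ∨
        ∃ L : List (V × V), L ≠ [] ∧ (∀ a ∈ L, a ∈ S) ∧ (L.map Prod.fst).Nodup ∧
          (L.map Prod.fst).Perm (L.map Prod.snd)) by
    refine h (Fintype.card V) [s] (by simp) rfl (by simp) (by simpa using Ne.symm hst)
      (by simp [arcs_single]) (by simp)
  intro n
  induction n with
  | zero =>
    intro p hp hh hnd ht harc hcard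
    rcases extract_step S s t hst hcons hs p hp hh hnd ht harc with h | ⟨w, hwp, hwt, haw⟩
    · exact h
    · exfalso
      have h1 : (p ++ [w]).Nodup := by
        rw [List.nodup_append]
        exact ⟨hnd, List.nodup_singleton w, fun x hx y hy hxy => by
          rw [List.mem_singleton.mp hy] at hxy; rw [hxy] at hx; exact hwp hx⟩
      have h2 := h1.length_le_card
      simp only [List.length_append, List.length_singleton] at h2
      omega
  | succ n ih =>
    intro p hp hh hnd ht harc hcard
    rcases extract_step S s t hst hcons hs p hp hh hnd ht harc with h | ⟨w, hwp, hwt, haw⟩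
    · exact h
    · refine ih (p ++ [w]) (by simp) ?_ ?_ ?_ ?_ ?_
      · rw [List.head?_append_of_ne_nil _ hp]; exact hh
      · rw [List.nodup_append]
        exact ⟨hnd, List.nodup_singleton w, fun x hx y hy hxy => by
          rw [List.mem_singleton.mp hy] at hxy; rw [hxy] at hx; exact hwp hx⟩
      · intro hmem
        rcases List.mem_append.mp hmem with h1 | h1
        · exact ht h1
        · exact hwt (List.mem_singleton.mp h1).symm
      · rw [arcs_concat p hp]
        intro x hx
        rcases List.mem_append.mp hx with h1 | h1
        · exact harc x h1
        · rw [List.mem_singleton.mp h1]; exact haw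
      · simp only [List.length_append, List.length_singleton]; omega

lemma isPath_mono [DecidableEq V] {E E' : Finset (V × V)} {s t : V} {p : List V}
    (hE : E ⊆ E') (h : IsPath E s t p) : IsPath E' s t p :=
  ⟨h.1, h.2.1, h.2.2.1, fun x hx => hE (h.2.2.2 x hx)⟩

lemma decompose [Fintype V] [DecidableEq V] (s t : V) (hst : s ≠ t) :
    ∀ (N : ℕ) (S : Finset (V × V)), S.card ≤ N →
    ∀ r : ℕ, (∀ v, v ≠ s → v ≠ t → ind S v = outd S v) →
    ind S s + r = outd S s →
    ∃ P : Finset (List V), (∀ p ∈ P, IsPath S s t p) ∧ ArcDisjoint P ∧ r ≤ P.card := by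
  intro N
  induction N with
  | zero =>
    intro S hS r hcons hsr
    have hSe : S = ∅ := Finset.card_eq_zero.mp (Nat.le_zero.mp hS)
    subst hSe
    simp only [ind, outd, Finset.filter_empty, Finset.card_empty] at hsr
    refine ⟨∅, by simp, ?_, by omega⟩
    intro p hp; exact absurd hp (Finset.notMem_empty p)
  | succ N ih =>
    intro S hS r hcons hsr
    rcases Nat.eq_zero_or_pos r with rfl | hr
    · refine ⟨∅, by simp, ?_, by omega⟩
      intro p hp; exact absurd hp (Finset.notMem_empty p)
    have hlt : ind S s < outd S s := by omega
    rcases extract S s t hst hcons hlt with ⟨p, hpath⟩ | ⟨L, hL0, hLS, hLnd, hLperm⟩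
    · -- path case
      obtain ⟨hh, hl, hnd, hsub⟩ := hpath
      set T := (arcs p).toFinset with hT
      have hTS : T ⊆ S := fun a ha => hsub a (List.mem_toFinset.mp ha)
      have hdl : p.dropLast.Nodup := (List.dropLast_sublist p).nodup hnd
      have harcnd : (arcs p).Nodup := by
        apply List.Nodup.of_map Prod.fst
        rw [map_fst_arcs]; exact hdl
      have hpne : p ≠ [] := by rintro rfl; simp at hh
      obtain ⟨x, l, rfl⟩ : ∃ x l, p = x :: l := by
        cases p with
        | nil => exact absurd rfl hpne
        | cons x l => exact ⟨x, l, rfl⟩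
      have hxs : x = s := by simpa using hh
      have hlne : l ≠ [] := by
        rintro rfl
        simp at hl
        exact hst (hxs ▸ hl)
      obtain ⟨y, l', rfl⟩ : ∃ y l', l = y :: l' := by
        cases l with
        | nil => exact absurd rfl hlne
        | cons y l' => exact ⟨y, l', rfl⟩
      have hTne : T.Nonempty := ⟨(x, y), by rw [hT, List.mem_toFinset, arcs_cons₂]; simp⟩
      have hcard : (S \ T).card ≤ N := by
        have h1 := Finset.card_sdiff_of_subset hTS
        have h2 : 0 < T.card := Finset.card_pos.mpr hTne
        omega
      -- degree bookkeeping
      have houtd : ∀ v, outd (S \ T) v + outd T v = outd S v := fun v =>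
        card_filter_sdiff S T hTS _
      have hind : ∀ v, ind (S \ T) v + ind T v = ind S v := fun v =>
        card_filter_sdiff S T hTS _
      have hTo : ∀ v, outd T v = (x :: y :: l').dropLast.count v := by
        intro v; rw [hT, outd_toFinset _ harcnd, map_fst_arcs]
      have hTi : ∀ v, ind T v = (x :: y :: l').tail.count v := by
        intro v; rw [hT, ind_toFinset _ harcnd, map_snd_arcs]
      have hcnt := fun v => count_dropLast_tail (x :: y :: l') s t v hh hl
      have hcons' : ∀ v, v ≠ s → v ≠ t → ind (S \ T) v = outd (S \ T) v := by
        intro v hvs hvt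
        have e1 := houtd v; have e2 := hind v
        have e3 := hcnt v
        rw [if_neg hvt, if_neg hvs] at e3
        have := hcons v hvs hvt
        rw [hTo v, hTi v] at *
        omega
      have hstail : (x :: y :: l').tail.count s = 0 := by
        apply List.count_eq_zero.mpr
        intro hmem
        rw [List.tail_cons] at hmem
        exact (List.nodup_cons.mp hnd).1 (hxs ▸ hmem)
      have hsr' : ind (S \ T) s + (r - 1) = outd (S \ T) s := by
        have e1 := houtd s; have e2 := hind s
        have e3 := hcnt s
        rw [if_neg (hst), if_pos rfl] at e3
        rw [hTo s, hTi s] at *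
        rw [hstail] at *
        omega
      obtain ⟨P', hP1, hP2, hP3⟩ := ih (S \ T) hcard (r - 1) hcons' hsr'
      have hpnotin : (x :: y :: l') ∉ P' := by
        intro hmem
        have := (hP1 _ hmem).2.2.2 (x, y) (by rw [arcs_cons₂]; simp)
        rw [Finset.mem_sdiff] at this
        exact this.2 (by rw [hT, List.mem_toFinset, arcs_cons₂]; simp)
      refine ⟨insert (x :: y :: l') P', ?_, ?_, ?_⟩
      · intro q hq
        rcases Finset.mem_insert.mp hq with rfl | hq
        · exact ⟨hh, hl, hnd, hsub⟩
        · exact isPath_mono (Finset.sdiff_subset) (hP1 q hq)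
      · intro q1 h1 q2 h2 hne a ha1 ha2
        rcases Finset.mem_insert.mp h1 with rfl | h1 <;>
          rcases Finset.mem_insert.mp h2 with rfl | h2
        · exact hne rfl
        · have := (hP1 q2 h2).2.2.2 a ha2
          rw [Finset.mem_sdiff] at this
          exact this.2 (by rw [hT]; exact List.mem_toFinset.mpr ha1)
        · have := (hP1 q1 h1).2.2.2 a ha1
          rw [Finset.mem_sdiff] at this
          exact this.2 (by rw [hT]; exact List.mem_toFinset.mpr ha2)
        · exact hP2 q1 h1 q2 h2 hne a ha1 ha2
      · rw [Finset.card_insert_of_notMem hpnotin]; omega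
    · -- cycle case
      set T := L.toFinset with hT
      have hTS : T ⊆ S := fun a ha => hLS a (List.mem_toFinset.mp ha)
      have hLnd' : L.Nodup := List.Nodup.of_map Prod.fst hLnd
      have hTne : T.Nonempty := by
        obtain ⟨a, ha⟩ := List.exists_mem_of_ne_nil L hL0
        exact ⟨a, List.mem_toFinset.mpr ha⟩
      have hcard : (S \ T).card ≤ N := by
        have h1 := Finset.card_sdiff_of_subset hTS
        have h2 : 0 < T.card := Finset.card_pos.mpr hTne
        omega
      have houtd : ∀ v, outd (S \ T) v + outd T v = outd S v := fun v =>
        card_filter_sdiff S T hTS _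
      have hind : ∀ v, ind (S \ T) v + ind T v = ind S v := fun v =>
        card_filter_sdiff S T hTS _
      have hTio : ∀ v, ind T v = outd T v := by
        intro v
        rw [hT, ind_toFinset _ hLnd', outd_toFinset _ hLnd', hLperm.count_eq]
      have hcons' : ∀ v, v ≠ s → v ≠ t → ind (S \ T) v = outd (S \ T) v := by
        intro v hvs hvt
        have e1 := houtd v; have e2 := hind v; have e3 := hTio v
        have := hcons v hvs hvt
        omega
      have hsr' : ind (S \ T) s + r = outd (S \ T) s := by
        have e1 := houtd s; have e2 := hind s; have e3 := hTio s
        omega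
      obtain ⟨P', hP1, hP2, hP3⟩ := ih (S \ T) hcard r hcons' hsr'
      exact ⟨P', fun q hq => isPath_mono (Finset.sdiff_subset) (hP1 q hq), hP2, hP3⟩

lemma path_degrees [DecidableEq V] {E : Finset (V × V)} {s t : V} {p : List V}
    (h : IsPath E s t p) (hst : s ≠ t) :
    ind (arcs p).toFinset s = 0 ∧ outd (arcs p).toFinset s = 1 ∧
      (∀ v, v ≠ s → v ≠ t →
        ind (arcs p).toFinset v = outd (arcs p).toFinset v) := by
  obtain ⟨hh, hl, hnd, -⟩ := h
  have hdl : p.dropLast.Nodup := (List.dropLast_sublist p).nodup hnd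
  have harcnd : (arcs p).Nodup := by
    apply List.Nodup.of_map Prod.fst
    rw [map_fst_arcs]; exact hdl
  have hTo : ∀ v, outd (arcs p).toFinset v = p.dropLast.count v := by
    intro v; rw [outd_toFinset _ harcnd, map_fst_arcs]
  have hTi : ∀ v, ind (arcs p).toFinset v = p.tail.count v := by
    intro v; rw [ind_toFinset _ harcnd, map_snd_arcs]
  have hcnt := fun v => count_dropLast_tail p s t v hh hl
  have hpne : p ≠ [] := by rintro rfl; simp at hh
  obtain ⟨x, l, rfl⟩ : ∃ x l, p = x :: l := by
    cases p with
    | nil => exact absurd rfl hpne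
    | cons x l => exact ⟨x, l, rfl⟩
  have hxs : x = s := by simpa using hh
  have hstail : (x :: l).tail.count s = 0 := by
    apply List.count_eq_zero.mpr
    intro hmem
    rw [List.tail_cons] at hmem
    exact (List.nodup_cons.mp hnd).1 (hxs ▸ hmem)
  refine ⟨by rw [hTi, hstail], ?_, ?_⟩
  · have e3 := hcnt s
    rw [if_neg hst, if_pos rfl, hstail] at e3
    rw [hTo]; omega
  · intro v hvs hvt
    have e3 := hcnt v
    rw [if_neg hvt, if_neg hvs] at e3
    rw [hTo, hTi]; omega

lemma biUnion_deg [DecidableEq V] (P₀ : Finset (List V))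
    (hdisj : ∀ p ∈ P₀, ∀ q ∈ P₀, p ≠ q → ∀ a, a ∈ arcs p → a ∉ arcs q) (v : V) :
    outd (P₀.biUnion fun p => (arcs p).toFinset) v
        = ∑ p ∈ P₀, outd (arcs p).toFinset v ∧
    ind (P₀.biUnion fun p => (arcs p).toFinset) v
        = ∑ p ∈ P₀, ind (arcs p).toFinset v := by
  have hd : ∀ (pr : V × V → Prop) (inst : DecidablePred pr), ∀ p ∈ P₀, ∀ q ∈ P₀, p ≠ q →
      Disjoint ((arcs p).toFinset.filter pr) ((arcs q).toFinset.filter pr) := by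
    intro pr _ p hp q hq hne
    rw [Finset.disjoint_left]
    intro a ha ha'
    exact hdisj p hp q hq hne a
      (List.mem_toFinset.mp (Finset.mem_filter.mp ha).1)
      (List.mem_toFinset.mp (Finset.mem_filter.mp ha').1)
  constructor
  · rw [outd, Finset.filter_biUnion, Finset.card_biUnion (hd _ _)]; rfl
  · rw [ind, Finset.filter_biUnion, Finset.card_biUnion (hd _ _)]; rfl

/-- in the auxiliary min-cost flow instance (unit capacities on
original arcs, dummy arc `(s,t)` of capacity `k` and cost `C > ∑ c`), any
minimum-cost integral flow of value `k` sends exactly `max (k - m) 0` units on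
the dummy arc, where `m` is the maximum number of pairwise arc-disjoint
`s`-`t` paths. -/
theorem stmt7 [Fintype V] [DecidableEq V] (A : Finset (V × V)) (c : V × V → ℝ)
    (hc : ∀ a ∈ A, 0 < c a) (s t : V) (hst : s ≠ t) (hd : (s, t) ∉ A)
    (k m : ℕ) (C : ℝ) (hC : ∑ a ∈ A, c a < C)
    (b' : V × V → ℝ) (hbd : b' (s, t) = k) (hb1 : ∀ a ∈ A, b' a = 1)
    (hm1 : ∃ P : Finset (List V),
      (∀ p ∈ P, IsPath A s t p) ∧ ArcDisjoint P ∧ P.card = m)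
    (hm2 : ∀ P : Finset (List V),
      (∀ p ∈ P, IsPath A s t p) → ArcDisjoint P → P.card ≤ m)
    (f : V × V → ℝ) (hf : IsFlow (insert (s, t) A) b' s t f)
    (hint : ∀ a, ∃ n : ℤ, f a = n) (hval : flowValue s f = k)
    (hopt : ∀ g : V × V → ℝ, IsFlow (insert (s, t) A) b' s t g →
      (∀ a, ∃ n : ℤ, g a = n) → flowValue s g = k →
      (∑ a ∈ A, c a * f a) + C * f (s, t) ≤ (∑ a ∈ A, c a * g a) + C * g (s, t)) :
    f (s, t) = max ((k : ℝ) - (m : ℝ)) 0 := by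
  classical
  obtain ⟨n, hn⟩ := hint (s, t)
  have hn0 : 0 ≤ n := by
    have := hf.nonneg (s, t); rw [hn] at this; exact_mod_cast this
  have hnk : n ≤ (k : ℤ) := by
    have := hf.cap (s, t) (Finset.mem_insert_self _ _)
    rw [hn, hbd] at this; exact_mod_cast this
  have f01 : ∀ a ∈ A, f a = 0 ∨ f a = 1 := by
    intro a ha
    obtain ⟨na, hna⟩ := hint a
    have h0 : (0 : ℝ) ≤ (na : ℝ) := hna ▸ hf.nonneg a
    have h1 : (na : ℝ) ≤ 1 := by
      have := hf.cap a (Finset.mem_insert_of_mem ha)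
      rw [hna, hb1 a ha] at this; exact this
    have h0' : 0 ≤ na := by exact_mod_cast h0
    have h1' : na ≤ 1 := by exact_mod_cast h1
    have : na = 0 ∨ na = 1 := by omega
    rcases this with h | h
    · left; rw [hna, h]; norm_num
    · right; rw [hna, h]; norm_num
  set S := A.filter (fun a => f a = 1) with hSdef
  have hSA : S ⊆ A := Finset.filter_subset _ _
  have hfS : ∀ a : V × V, a ≠ (s, t) → f a = if a ∈ S then 1 else 0 := by
    intro a hast
    by_cases haA : a ∈ A
    · rcases f01 a haA with h | h
      · have hnotmem : a ∉ S := by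
          intro hmem
          have h2 := (Finset.mem_filter.mp hmem).2
          rw [h] at h2; norm_num at h2
        rw [h, if_neg hnotmem]
      · rw [h, if_pos (Finset.mem_filter.mpr ⟨haA, h⟩)]
    · rw [hf.support a (by simp [haA, hast]), if_neg (fun hmem => haA (hSA hmem))]
  have hsum_in : ∀ v, v ≠ t → ∑ u, f (u, v) = (ind S v : ℝ) := by
    intro v hvt
    rw [← sum_ite_ind S v]
    exact Finset.sum_congr rfl fun u _ =>
      hfS (u, v) (fun he => hvt (congrArg Prod.snd he))
  have hsum_out : ∀ v, v ≠ s → ∑ u, f (v, u) = (outd S v : ℝ) := by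
    intro v hvs
    rw [← sum_ite_outd S v]
    exact Finset.sum_congr rfl fun u _ =>
      hfS (v, u) (fun he => hvs (congrArg Prod.fst he))
  have hstS : (s, t) ∉ S := fun hmem => hd (hSA hmem)
  have hsum_s : ∑ u, f (s, u) = (outd S s : ℝ) + f (s, t) := by
    have hpt : ∀ u : V, f (s, u)
        = (if (s, u) ∈ S then (1 : ℝ) else 0) + (if u = t then f (s, t) else 0) := by
      intro u
      by_cases hut : u = t
      · subst hut; rw [if_neg hstS, if_pos rfl]; ring
      · rw [hfS (s, u) (fun he => hut (congrArg Prod.snd he)), if_neg hut, add_zero]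
    rw [Finset.sum_congr rfl (fun u _ => hpt u), Finset.sum_add_distrib, sum_ite_outd]
    congr 1
    simp
  have hconsS : ∀ v, v ≠ s → v ≠ t → ind S v = outd S v := by
    intro v hvs hvt
    have hcv := hf.conserve v hvs hvt
    rw [hsum_in v hvt, hsum_out v hvs] at hcv
    exact_mod_cast hcv
  have hvalS : (ind S s : ℝ) + ((k : ℝ) - (n : ℝ)) = (outd S s : ℝ) := by
    have hv := hval
    rw [flowValue, hsum_s, hsum_in s hst, hn] at hv
    linarith
  have hlow : (k : ℤ) - n ≤ (m : ℤ) := by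
    set r : ℕ := ((k : ℤ) - n).toNat with hr
    have hrz : (r : ℤ) = (k : ℤ) - n := Int.toNat_of_nonneg (by omega)
    have hrc : (r : ℝ) = (k : ℝ) - (n : ℝ) := by exact_mod_cast congrArg (Int.cast : ℤ → ℝ) hrz
    have hsr : ind S s + r = outd S s := by
      have : (ind S s : ℝ) + (r : ℝ) = (outd S s : ℝ) := by rw [hrc]; exact hvalS
      exact_mod_cast this
    obtain ⟨P, hP1, hP2, hP3⟩ := decompose s t hst S.card S le_rfl r hconsS hsr
    have hrm : P.card ≤ m := hm2 P (fun p hp => isPath_mono hSA (hP1 p hp)) hP2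
    have : r ≤ m := le_trans hP3 hrm
    omega
  -- upper bound: construct the comparison flow g
  obtain ⟨P, hPpath, hPdisj, hPcard⟩ := hm1
  obtain ⟨P₀, hP₀P, hP₀card⟩ := Finset.exists_subset_card_eq
    (show min k m ≤ P.card by rw [hPcard]; exact min_le_right _ _)
  set T := P₀.biUnion (fun p => (arcs p).toFinset) with hTdef
  have hTA : T ⊆ A := by
    intro a ha
    obtain ⟨p, hp, hap⟩ := Finset.mem_biUnion.mp ha
    exact (hPpath p (hP₀P hp)).2.2.2 a (List.mem_toFinset.mp hap)
  have hstT : (s, t) ∉ T := fun h => hd (hTA h)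
  have hdisj₀ : ∀ p ∈ P₀, ∀ q ∈ P₀, p ≠ q → ∀ a, a ∈ arcs p → a ∉ arcs q :=
    fun p hp q hq => hPdisj p (hP₀P hp) q (hP₀P hq)
  have hdeg := fun v => biUnion_deg P₀ hdisj₀ v
  have hTind_s : ind T s = 0 := by
    rw [(hdeg s).2]
    exact Finset.sum_eq_zero fun p hp => (path_degrees (hPpath p (hP₀P hp)) hst).1
  have hToutd_s : outd T s = min k m := by
    rw [(hdeg s).1, ← hP₀card, Finset.card_eq_sum_ones]
    exact Finset.sum_congr rfl fun p hp => (path_degrees (hPpath p (hP₀P hp)) hst).2.1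
  have hTbal : ∀ v, v ≠ s → v ≠ t → ind T v = outd T v := by
    intro v hvs hvt
    rw [(hdeg v).1, (hdeg v).2]
    exact Finset.sum_congr rfl fun p hp =>
      (path_degrees (hPpath p (hP₀P hp)) hst).2.2 v hvs hvt
  set g : V × V → ℝ := fun a =>
    if a = (s, t) then ((k - min k m : ℕ) : ℝ) else if a ∈ T then 1 else 0 with hgdef
  have hg_st : g (s, t) = ((k - min k m : ℕ) : ℝ) := by rw [hgdef]; simp
  have hg_ne : ∀ a : V × V, a ≠ (s, t) → g a = if a ∈ T then 1 else 0 := by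
    intro a ha; rw [hgdef]; exact if_neg ha
  have hg_in : ∀ v, v ≠ t → ∑ u, g (u, v) = (ind T v : ℝ) := by
    intro v hvt
    rw [← sum_ite_ind T v]
    exact Finset.sum_congr rfl fun u _ =>
      hg_ne (u, v) (fun he => hvt (congrArg Prod.snd he))
  have hg_out : ∀ v, v ≠ s → ∑ u, g (v, u) = (outd T v : ℝ) := by
    intro v hvs
    rw [← sum_ite_outd T v]
    exact Finset.sum_congr rfl fun u _ =>
      hg_ne (v, u) (fun he => hvs (congrArg Prod.fst he))
  have hg_s : ∑ u, g (s, u) = (outd T s : ℝ) + ((k - min k m : ℕ) : ℝ) := by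
    have hpt : ∀ u : V, g (s, u)
        = (if (s, u) ∈ T then (1 : ℝ) else 0)
          + (if u = t then ((k - min k m : ℕ) : ℝ) else 0) := by
      intro u
      by_cases hut : u = t
      · subst hut; rw [hg_st, if_neg hstT, if_pos rfl]; ring
      · rw [hg_ne (s, u) (fun he => hut (congrArg Prod.snd he)), if_neg hut, add_zero]
    rw [Finset.sum_congr rfl (fun u _ => hpt u), Finset.sum_add_distrib, sum_ite_outd]
    congr 1
    simp
  have hgflow : IsFlow (insert (s, t) A) b' s t g := by
    refine ⟨?_, ?_, ?_, ?_⟩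
    · intro a
      rw [hgdef]
      dsimp only
      split
      · positivity
      · split <;> norm_num
    · intro a ha
      simp only [Finset.mem_insert, not_or] at ha
      rw [hg_ne a ha.1, if_neg (fun hmem => ha.2 (hTA hmem))]
    · intro a ha
      rcases Finset.mem_insert.mp ha with rfl | haA
      · rw [hg_st, hbd]
        exact_mod_cast Nat.sub_le k (min k m)
      · rw [hg_ne a (fun he => hd (he ▸ haA)), hb1 a haA]
        split <;> norm_num
    · intro v hvs hvt
      rw [hg_in v hvt, hg_out v hvs, hTbal v hvs hvt]
  have hgint : ∀ a, ∃ z : ℤ, g a = z := by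
    intro a
    rw [hgdef]
    dsimp only
    split
    · exact ⟨(k - min k m : ℕ), by push_cast; ring⟩
    · split
      · exact ⟨1, by norm_num⟩
      · exact ⟨0, by norm_num⟩
  have hgval : flowValue s g = k := by
    rw [flowValue, hg_s, hg_in s hst, hTind_s, hToutd_s]
    push_cast [Nat.cast_sub (min_le_left k m)]
    have := min_le_left k m
    rcases le_total k m with h | h <;> simp [min_eq_left, min_eq_right, h] <;> ring
  have hineq := hopt g hgflow hgint hgval
  have hsumc0 : 0 ≤ ∑ a ∈ A, c a := Finset.sum_nonneg fun a ha => (hc a ha).le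
  have hC0 : 0 < C := lt_of_le_of_lt hsumc0 hC
  have hlhs : C * (n : ℝ) ≤ (∑ a ∈ A, c a * f a) + C * f (s, t) := by
    have h0 : 0 ≤ ∑ a ∈ A, c a * f a :=
      Finset.sum_nonneg fun a ha => mul_nonneg (hc a ha).le (hf.nonneg a)
    rw [hn] at *
    linarith
  have hrhs : (∑ a ∈ A, c a * g a) + C * g (s, t)
      ≤ (∑ a ∈ A, c a) + C * ((k - min k m : ℕ) : ℝ) := by
    have h1 : ∑ a ∈ A, c a * g a ≤ ∑ a ∈ A, c a := by
      apply Finset.sum_le_sum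
      intro a ha
      have hga : g a ≤ 1 := by
        rw [hg_ne a (fun he => hd (he ▸ ha))]
        split <;> norm_num
      calc c a * g a ≤ c a * 1 := by
            exact mul_le_mul_of_nonneg_left hga (hc a ha).le
        _ = c a := mul_one _
    rw [hg_st]
    linarith
  have hhigh : n ≤ ((k - min k m : ℕ) : ℤ) := by
    have hch : C * (n : ℝ) < C * (((k - min k m : ℕ) : ℝ) + 1) := by
      have := le_trans hlhs (le_trans hineq hrhs)
      nlinarith
    have h2 : (n : ℝ) < ((k - min k m : ℕ) : ℝ) + 1 := by
      exact lt_of_mul_lt_mul_left hch hC0.le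
    have h3 : (n : ℤ) < ((k - min k m : ℕ) : ℤ) + 1 := by exact_mod_cast h2
    omega
  have hfin : n = max ((k : ℤ) - (m : ℤ)) 0 := by omega
  rw [hn, hfin]
  rcases le_total ((k : ℤ) - (m : ℤ)) 0 with h | h
  · rw [max_eq_right h, max_eq_right (by exact_mod_cast h : (k : ℝ) - (m : ℝ) ≤ 0)]
    norm_num
  · rw [max_eq_left h, max_eq_left (by exact_mod_cast h : (0:ℝ) ≤ (k : ℝ) - (m : ℝ))]
    push_cast
    ring
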